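/- For every nonnegative integer n and real y with y^2 = 1+4x, the n-th coefficient identity P_n(y)^2 = ∑_{k=0}^n C(n,k) C(n+k,n) C(2k,k) x^k holds, where P_n is the Legendre polynomial. -/

import Mathlib

/-- The `n`-th Legendre polynomial, as a function on `ℝ`:
`P n y = 2^{-n} ∑_{k=0}^n C(n,k)^2 (y-1)^{n-k} (y+1)^k`. -/
noncomputable def legendreP (n : ℕ) (y : ℝ) : ℝ :=
  2^(-(n : ℤ)) * ∑ k ∈ Finset.range (n + 1),
    (n.choose k : ℝ)^2 * (y - 1)^(n - k) * (y + 1)^k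

/-!
Put `y = 2t + 1`, so that `x = t(t + 1)` and `P_n(y) = ∑ C(n,k) C(n+k,k) tᵏ`. Both this
polynomial in `t` and the Clausen polynomial `Q_n(x) = ∑ C(n,k) C(n+k,k) C(2k,k) xᵏ` satisfy
three-term recurrences in `n`, which reduce coefficientwise to the ratios of neighbouring
hypergeometric coefficients. Squaring Bonnet's recurrence
`(n+2) P_{n+2} = (2n+3) y P_{n+1} - (n+1) P_n` brings in the product `P_{n+1} P_n`, so the
induction carries along `(n+1) y P_{n+1} P_n = y² R_{n+1}(x)`, where
`R_n(x) = ∑ (n-k) C(n,k) C(n+k,k) C(2k,k) xᵏ` obeys a first-order recurrence of its own.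
-/

open Finset Polynomial

lemma coeff_sum_range_C_mul_X_pow {R : Type*} [Semiring R] {n : ℕ} {f : ℕ → R}
    (hf : ∀ k, n < k → f k = 0) (m : ℕ) :
    (∑ k ∈ range (n + 1), C (f k) * X ^ k).coeff m = f m := by
  simp only [finsetSum_coeff, coeff_C_mul_X_pow, sum_ite_eq, mem_range]
  split_ifs with h
  · rfl
  · exact (hf m (by omega)).symm

noncomputable def legendreCoeff (n k : ℕ) : ℝ := n.choose k * (n + k).choose k

noncomputable def clausenCoeff (n k : ℕ) : ℝ := legendreCoeff n k * k.centralBinom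

@[simp] lemma legendreCoeff_zero_right (n : ℕ) : legendreCoeff n 0 = 1 := by
  simp [legendreCoeff]

@[simp] lemma clausenCoeff_zero_right (n : ℕ) : clausenCoeff n 0 = 1 := by
  simp [clausenCoeff]

lemma legendreCoeff_eq_zero_of_lt {n k : ℕ} (h : n < k) : legendreCoeff n k = 0 := by
  simp [legendreCoeff, Nat.choose_eq_zero_of_lt h]

lemma clausenCoeff_eq_zero_of_lt {n k : ℕ} (h : n < k) : clausenCoeff n k = 0 := by
  simp [clausenCoeff, legendreCoeff_eq_zero_of_lt h]

lemma cast_choose_add_mul (n k : ℕ) :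
    ((n + k).choose k : ℝ) * (n + k + 1) = (n + 1 + k).choose k * (n + 1) := by
  have := Nat.choose_mul_succ_eq (n + k) k
  rw [show n + k + 1 - k = n + 1 by omega, show n + k + 1 = n + 1 + k by omega] at this
  have := congrArg (Nat.cast : ℕ → ℝ) this
  push_cast at this
  linear_combination this

lemma sub_mul_legendreCoeff_succ_left (n k : ℕ) :
    ((n : ℝ) + 1 - k) * legendreCoeff (n + 1) k = (n + 1 + k) * legendreCoeff n k := by
  rcases le_or_gt k (n + 1) with hk | hk
  · have h₁ : (n.choose k : ℝ) * (n + 1) = (n + 1).choose k * ((n : ℝ) + 1 - k) := by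
      have := congrArg (Nat.cast : ℕ → ℝ) (Nat.choose_mul_succ_eq n k)
      push_cast [hk] at this
      exact this
    simp only [legendreCoeff]
    linear_combination
      -((n + 1 + k).choose k : ℝ) * h₁ - (n.choose k : ℝ) * cast_choose_add_mul n k
  · rw [legendreCoeff_eq_zero_of_lt hk, legendreCoeff_eq_zero_of_lt (by omega)]
    ring

lemma sq_mul_legendreCoeff_succ_succ (n k : ℕ) :
    ((k : ℝ) + 1) ^ 2 * legendreCoeff (n + 1) (k + 1) =
      (n + k + 2) * (n + k + 1) * legendreCoeff n k := by
  have h₁ : ((n : ℝ) + 1) * n.choose k = (n + 1).choose (k + 1) * (k + 1) := by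
    exact_mod_cast Nat.add_one_mul_choose_eq n k
  have h₂ : ((n : ℝ) + 1 + k + 1) * (n + 1 + k).choose k =
      (n + 1 + k + 1).choose (k + 1) * (k + 1) := by
    exact_mod_cast Nat.add_one_mul_choose_eq (n + 1 + k) k
  simp only [legendreCoeff, ← add_assoc]
  linear_combination (-(k + 1) * ((n + 1 + k + 1).choose (k + 1) : ℝ)) * h₁
    - (n + 1) * (n.choose k : ℝ) * h₂
    - (n + k + 2) * (n.choose k : ℝ) * cast_choose_add_mul n k
lemma legendreCoeff_neighbors_eq (n k : ℕ) :
    legendreCoeff (n + 1) (k + 1) = (n + 1 - k) / (n + k + 3) * legendreCoeff (n + 2) (k + 1) ∧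
    legendreCoeff n (k + 1) = (n - k) / (n + k + 2) * legendreCoeff (n + 1) (k + 1) ∧
    legendreCoeff (n + 1) k =
      (k + 1) ^ 2 / ((n + k + 2) * (n + k + 3)) * legendreCoeff (n + 2) (k + 1) := by
  have h₁ := sub_mul_legendreCoeff_succ_left (n + 1) (k + 1)
  have h₀ := sub_mul_legendreCoeff_succ_left n (k + 1)
  have h := sq_mul_legendreCoeff_succ_succ (n + 1) k
  push_cast at h₁ h₀ h
  refine ⟨?_, ?_, ?_⟩ <;> field_simp
  · linear_combination -h₁
  · linear_combination -h₀
  · linear_combination -h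

lemma legendreCoeff_three_term (n k : ℕ) :
    ((n : ℝ) + 2) * legendreCoeff (n + 2) (k + 1) =
      (2 * n + 3) * (2 * legendreCoeff (n + 1) k + legendreCoeff (n + 1) (k + 1))
        - (n + 1) * legendreCoeff n (k + 1) := by
  obtain ⟨h₁, h₀, h⟩ := legendreCoeff_neighbors_eq n k
  rw [h₀, h₁, h]
  field_simp
  ring

lemma clausenCoeff_three_term (n k : ℕ) :
    ((n : ℝ) + 2) ^ 2 * clausenCoeff (n + 2) (k + 1) =
      (2 * n + 3) * (2 * k + 3) * clausenCoeff (n + 1) (k + 1)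
        + 4 * (2 * n + 3) * (2 * k + 1) * clausenCoeff (n + 1) k
        + (n + 1) ^ 2 * clausenCoeff n (k + 1) := by
  obtain ⟨h₁, h₀, h⟩ := legendreCoeff_neighbors_eq n k
  have hc : ((k + 1).centralBinom : ℝ) = 2 * (2 * k + 1) / (k + 1) * k.centralBinom := by
    field_simp
    rw [mul_comm]
    exact_mod_cast Nat.succ_mul_centralBinom_succ k
  simp only [clausenCoeff]
  rw [h₀, h₁, h, hc]
  field_simp
  ring

lemma sub_mul_clausenCoeff_succ_left (n k : ℕ) :
    ((n : ℝ) + 1 - k) * clausenCoeff (n + 1) k = (n + 1 + k) * clausenCoeff n k := by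
  simp only [clausenCoeff, ← mul_assoc, sub_mul_legendreCoeff_succ_left]

noncomputable def legendreShifted (n : ℕ) : ℝ[X] :=
  ∑ k ∈ range (n + 1), C ((n.choose k : ℝ) ^ 2) * X ^ (n - k) * (X + 1) ^ k

lemma coeff_legendreShifted (n m : ℕ) : (legendreShifted n).coeff m = legendreCoeff n m := by
  have hvandermonde :
      (n + m).choose m = ∑ k ∈ range (n + 1), n.choose k * m.choose (n - k) := by
    rw [← Nat.choose_symm_add, Nat.add_choose_eq, Nat.sum_antidiagonal_eq_sum_range_succ_mk]
  simp only [legendreShifted, finsetSum_coeff, mul_assoc, coeff_C_mul, coeff_X_pow_mul',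
    coeff_X_add_one_pow, legendreCoeff, hvandermonde]
  push_cast
  rw [mul_sum]
  refine sum_congr rfl fun k hk => ?_
  split_ifs with h
  · have hk : k ≤ n := mem_range_succ_iff.mp hk
    have := Nat.choose_mul (n := n) (k := m) h
    rw [Nat.choose_symm hk, Nat.sub_sub_self hk] at this
    have := congrArg (Nat.cast : ℕ → ℝ) this
    push_cast at this ⊢
    linear_combination -(n.choose k : ℝ) * this
  · rw [Nat.choose_eq_zero_of_lt (not_le.mp h)]
    simp

noncomputable def clausenPoly (n : ℕ) : ℝ[X] :=
  ∑ k ∈ range (n + 1), C (clausenCoeff n k) * X ^ k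

noncomputable def clausenCross (n : ℕ) : ℝ[X] :=
  ∑ k ∈ range (n + 1), C (((n : ℝ) - k) * clausenCoeff n k) * X ^ k

lemma coeff_clausenPoly (n m : ℕ) : (clausenPoly n).coeff m = clausenCoeff n m :=
  coeff_sum_range_C_mul_X_pow (fun _ hk ↦ clausenCoeff_eq_zero_of_lt hk) m

lemma coeff_clausenCross (n m : ℕ) :
    (clausenCross n).coeff m = ((n : ℝ) - m) * clausenCoeff n m :=
  coeff_sum_range_C_mul_X_pow (fun _ hk ↦ by rw [clausenCoeff_eq_zero_of_lt hk, mul_zero]) m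

lemma legendreShifted_recurrence (n : ℕ) :
    C ((n : ℝ) + 2) * legendreShifted (n + 2) =
      C (2 * (n : ℝ) + 3) * ((2 * X + 1) * legendreShifted (n + 1))
        - C ((n : ℝ) + 1) * legendreShifted n := by
  ext (_ | k) <;>
    simp only [coeff_sub, coeff_C_mul, add_mul, coeff_add, one_mul, mul_assoc, coeff_ofNat_mul,
      coeff_X_mul, coeff_X_mul_zero, coeff_legendreShifted, legendreCoeff_zero_right]
  · ring
  · linear_combination legendreCoeff_three_term n k

lemma clausenCross_recurrence (n : ℕ) :
    clausenCross (n + 2) =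
      C (2 * (n : ℝ) + 3) * clausenPoly (n + 1) - clausenCross (n + 1) := by
  ext k
  have := sub_mul_clausenCoeff_succ_left (n + 1) k
  simp only [coeff_sub, coeff_C_mul, coeff_clausenPoly, coeff_clausenCross]
  push_cast at this ⊢
  linear_combination this

lemma clausenPoly_recurrence (n : ℕ) :
    C (((n : ℝ) + 2) ^ 2) * clausenPoly (n + 2) =
      C (2 * (n : ℝ) + 3) *
          ((1 + 4 * X) * (C (2 * (n : ℝ) + 3) * clausenPoly (n + 1) - 2 * clausenCross (n + 1)))
        + C (((n : ℝ) + 1) ^ 2) * clausenPoly n := by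
  ext (_ | k) <;>
    simp only [coeff_sub, coeff_C_mul, add_mul, coeff_add, one_mul, mul_assoc, coeff_ofNat_mul,
      coeff_X_mul, coeff_X_mul_zero, coeff_clausenPoly, coeff_clausenCross,
      clausenCoeff_zero_right, Nat.cast_add, Nat.cast_one, Nat.cast_zero]
  · ring
  · linear_combination clausenCoeff_three_term n k

lemma legendreShifted_sq_and_cross (t : ℝ) (n : ℕ) :
    (legendreShifted n).eval t ^ 2 = (clausenPoly n).eval (t ^ 2 + t) ∧
    (legendreShifted (n + 1)).eval t ^ 2 = (clausenPoly (n + 1)).eval (t ^ 2 + t) ∧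
    ((n : ℝ) + 1) * (2 * t + 1) *
        ((legendreShifted (n + 1)).eval t * (legendreShifted n).eval t) =
      (2 * t + 1) ^ 2 * (clausenCross (n + 1)).eval (t ^ 2 + t) := by
  induction n with
  | zero =>
    have hc : (Nat.centralBinom 1 : ℝ) = 2 := by norm_num [Nat.centralBinom_eq_two_mul_choose]
    refine ⟨?_, ?_, ?_⟩ <;>
      simp [legendreShifted, clausenPoly, clausenCross, clausenCoeff, legendreCoeff,
        sum_range_succ, hc] <;>
      ring
  | succ n ih =>
    obtain ⟨h₀, h₁, hcross⟩ := ih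
    have hP := congrArg (eval t) (legendreShifted_recurrence n)
    have hQ := congrArg (eval (t ^ 2 + t)) (clausenPoly_recurrence n)
    have hR := congrArg (eval (t ^ 2 + t)) (clausenCross_recurrence n)
    simp only [eval_sub, eval_add, eval_mul, eval_C, eval_X, eval_one, eval_ofNat] at hP hQ hR
    push_cast
    refine ⟨h₁, ?_, ?_⟩
    · have hn : ((n : ℝ) + 2) ^ 2 ≠ 0 := by positivity
      apply mul_left_cancel₀ hn
      linear_combination congrArg (· ^ 2) hP
        + (2 * (n : ℝ) + 3) ^ 2 * (2 * t + 1) ^ 2 * h₁ + ((n : ℝ) + 1) ^ 2 * h₀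
        - 2 * (2 * (n : ℝ) + 3) * hcross - hQ
    · linear_combination ((2 * t + 1) * (legendreShifted (n + 1)).eval t) * hP
        + (2 * (n : ℝ) + 3) * (2 * t + 1) ^ 2 * h₁ - hcross - (2 * t + 1) ^ 2 * hR

lemma legendreP_two_mul_add_one (n : ℕ) (t : ℝ) :
    legendreP n (2 * t + 1) = (legendreShifted n).eval t := by
  simp only [legendreP, legendreShifted, eval_finsetSum, eval_mul, eval_C, eval_pow, eval_add,
    eval_X, eval_one]
  rw [mul_sum]
  refine sum_congr rfl fun k hk => ?_
  have hpow : (2 : ℝ) ^ (n - k) * 2 ^ k = 2 ^ n :=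
    pow_sub_mul_pow 2 (mem_range_succ_iff.mp hk)
  rw [show 2 * t + 1 - 1 = 2 * t by ring, show 2 * t + 1 + 1 = 2 * (t + 1) by ring, mul_pow,
    mul_pow, zpow_neg, zpow_natCast]
  field_simp
  linear_combination ((n.choose k : ℝ) ^ 2 * t ^ (n - k) * (t + 1) ^ k) * hpow

/-- Clausen's identity under the substitution `y² = 1 + 4x`:
`P_n(y)² = ∑_{k=0}^n C(n,k) C(n+k,n) C(2k,k) x^k`. -/
theorem legendre_sq_clausen_sub (n : ℕ) (x y : ℝ) (h : y^2 = 1 + 4 * x) :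
    (legendreP n y)^2 =
      ∑ k ∈ Finset.range (n + 1),
        (n.choose k : ℝ) * ((n + k).choose n : ℝ) * ((2 * k).choose k : ℝ) * x^k := by
  obtain ⟨t, rfl⟩ : ∃ t, y = 2 * t + 1 := ⟨(y - 1) / 2, by ring⟩
  obtain rfl : x = t ^ 2 + t := by linear_combination -h / 4
  rw [legendreP_two_mul_add_one, (legendreShifted_sq_and_cross t n).1, clausenPoly,
    eval_finsetSum]
  refine sum_congr rfl fun k _ => ?_
  rw [eval_C_mul, eval_X_pow, clausenCoeff, legendreCoeff, Nat.choose_symm_add,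
    Nat.centralBinom_eq_two_mul_choose]
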